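/- arXiv:2508.14651 — 2 statements merged into one kernel-verified Lean document; each statement's English description precedes it below -/
import Mathlib

section
/- Let I be an ideal of C(X). The following are equivalent: (i) C(X) with the m^I-topology is second countable; (ii) C(X) with the m^I-topology is separable; (iii) C(X) with the m^I-topology is Lindelöf; (iv) X is compact and metrizable and I = C(X). -/
open Set Topology TopologicalSpace Pointwise

/-- `⋂ Z[I] = ⋂_{g ∈ I} Z(g)`, the intersection of the zero sets of members of `I`. -/
def zInter {X : Type*} [TopologicalSpace X] (I : Ideal C(X, ℝ)) : Set X :=
  {x | ∀ g ∈ I, g x = 0}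

/-- `B_u(f, I, ε) = {g ∈ C(X) : sup_{x ∈ X} |f x - g x| < ε and f - g ∈ I}`. -/
def uBall {X : Type*} [TopologicalSpace X] (I : Ideal C(X, ℝ)) (f : C(X, ℝ)) (ε : ℝ) :
    Set C(X, ℝ) :=
  {g | (∃ M, M < ε ∧ ∀ x, |f x - g x| ≤ M) ∧ f - g ∈ I}

/-- The `u^I`-topology on `C(X)`, with open base `{B_u(f, I, ε) : f ∈ C(X), ε > 0}`. -/
def uTopology {X : Type*} [TopologicalSpace X] (I : Ideal C(X, ℝ)) :
    TopologicalSpace C(X, ℝ) :=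
  TopologicalSpace.generateFrom {B | ∃ f ε, 0 < ε ∧ B = uBall I f ε}

/-- `B_m(f, I, u) = {g ∈ C(X) : |f x - g x| < u x for all x ∈ X and f - g ∈ I}`. -/
def mBall {X : Type*} [TopologicalSpace X] (I : Ideal C(X, ℝ)) (f u : C(X, ℝ)) :
    Set C(X, ℝ) :=
  {g | (∀ x, |f x - g x| < u x) ∧ f - g ∈ I}

/-- The `m^I`-topology on `C(X)`, with open base
`{B_m(f, I, u) : f ∈ C(X), u ∈ C₊(X)}`. -/
def mTopology {X : Type*} [TopologicalSpace X] (I : Ideal C(X, ℝ)) :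
    TopologicalSpace C(X, ℝ) :=
  TopologicalSpace.generateFrom {B | ∃ f u, (∀ x, 0 < u x) ∧ B = mBall I f u}

/-- A subset `Y` of `X` is bounded if every `f ∈ C(X)` is bounded on `Y`. -/
def BoundedOn {X : Type*} [TopologicalSpace X] (Y : Set X) : Prop :=
  ∀ f : C(X, ℝ), ∃ M : ℝ, ∀ x ∈ Y, |f x| ≤ M

/-- `X` is `I`-pseudocompact if `X ∖ ⋂ Z[I]` is a bounded subset of `X`. -/
def IPseudocompact {X : Type*} [TopologicalSpace X] (I : Ideal C(X, ℝ)) : Prop :=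
  BoundedOn (zInter I)ᶜ

/-- A subset `S` of `X` is pseudocompact (as a subspace) if every continuous
real-valued function on the subspace `S` is bounded. -/
def PseudocompactOn {X : Type*} [TopologicalSpace X] (S : Set X) : Prop :=
  ∀ g : C(S, ℝ), ∃ M : ℝ, ∀ y : S, |g y| ≤ M

/-! Balls `B_m(f, I, ε)` of constant radius are symmetric in their centre and their members, so
separability or the Lindelöf property of the `m^I`-topology gives a countable `S ⊆ C(X)` such that
every `g` lies in `B_m(f, I, ε)` for some `f ∈ S`, for every `ε > 0`. With `ε = 1` this makes
`C(X)/I` countable, and since `ℝ` embeds in every nonzero quotient, `I = C(X)`. Uniform density of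
`S` forces every continuous function to be bounded (pigeonhole on the multiples `r • f`), and by
complete regularity `x ↦ (f x)_{f ∈ S}` embeds `X` into `ℝ^S` with closed bounded range, so `X` is
compact and metrizable. Conversely, on compact `X` the `m^{C(X)}`-topology is the sup-norm
topology, which is second countable when `X` is also metrizable. -/

theorem Ideal.eq_top_of_countable_quotient {K A : Type*} [Field K] [Uncountable K] [CommRing A]
    [Algebra K A] (I : Ideal A) [Countable (A ⧸ I)] : I = ⊤ := by
  by_contra hI
  have := Ideal.Quotient.nontrivial_iff.mpr hI
  exact not_injective_uncountable_countable _ (algebraMap K (A ⧸ I)).injective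

section MTopology

variable {X : Type*} [TopologicalSpace X] {I : Ideal C(X, ℝ)} {f g u : C(X, ℝ)}

lemma isOpen_mBall (hu : ∀ x, 0 < u x) : IsOpen[mTopology I] (mBall I f u) :=
  .basic _ ⟨f, u, hu, rfl⟩

lemma self_mem_mBall (hu : ∀ x, 0 < u x) : f ∈ mBall I f u :=
  ⟨fun x => by simpa using hu x, by simp⟩

lemma mem_mBall_comm : g ∈ mBall I f u ↔ f ∈ mBall I g u := by
  simp only [mBall, mem_ofPred_eq, abs_sub_comm (f _), ← neg_sub f g, I.neg_mem_iff]

lemma exists_countable_mBall_cover_of_separableSpace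
    (h : @SeparableSpace C(X, ℝ) (mTopology I)) :
    ∃ S : Set C(X, ℝ), S.Countable ∧
      ∀ g, ∀ ε > 0, ∃ f ∈ S, g ∈ mBall I f (.const X ε) := by
  let := mTopology I
  obtain ⟨D, hDc, hD⟩ := h.exists_countable_dense
  refine ⟨D, hDc, fun g ε hε => ?_⟩
  have hu : ∀ x, 0 < ContinuousMap.const X ε x := fun _ => hε
  obtain ⟨f, hfD, hf⟩ := hD.exists_mem_open (isOpen_mBall hu) ⟨g, self_mem_mBall hu⟩
  exact ⟨f, hfD, mem_mBall_comm.mp hf⟩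

lemma exists_countable_mBall_cover_of_lindelofSpace
    (h : @LindelofSpace C(X, ℝ) (mTopology I)) :
    ∃ S : Set C(X, ℝ), S.Countable ∧
      ∀ g, ∀ ε > 0, ∃ f ∈ S, g ∈ mBall I f (.const X ε) := by
  let := mTopology I
  have hcover (n : ℕ) : ∃ S : Set C(X, ℝ), S.Countable ∧
      ∀ g, ∃ f ∈ S, g ∈ mBall I f (.const X (1 / (n + 1))) := by
    have hu : ∀ x, 0 < ContinuousMap.const X (1 / ((n : ℝ) + 1)) x :=
      fun _ => Nat.one_div_pos_of_nat
    obtain ⟨S, hSc, -, hS⟩ := isLindelof_univ.elim_nhds_subcover _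
      fun f _ => (isOpen_mBall hu).mem_nhds (self_mem_mBall hu)
    exact ⟨S, hSc, fun g => by simpa using hS (mem_univ g)⟩
  choose S hSc hS using hcover
  refine ⟨⋃ n, S n, countable_iUnion hSc, fun g ε hε => ?_⟩
  obtain ⟨n, hn⟩ := exists_nat_one_div_lt hε
  obtain ⟨f, hfS, hgf, hfg⟩ := hS n g
  exact ⟨f, mem_iUnion.mpr ⟨n, hfS⟩, fun x => (hgf x).trans hn, hfg⟩

lemma countable_quotient_of_mBall_cover {S : Set C(X, ℝ)} (hS : S.Countable)
    (hcover : ∀ g, ∃ f ∈ S, g ∈ mBall I f u) : Countable (C(X, ℝ) ⧸ I) := by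
  have := hS.to_subtype
  refine Function.Surjective.countable (f := fun f : S => Ideal.Quotient.mk I f) fun q => ?_
  obtain ⟨g, rfl⟩ := Ideal.Quotient.mk_surjective q
  obtain ⟨f, hfS, -, hfg⟩ := hcover g
  exact ⟨⟨f, hfS⟩, Ideal.Quotient.eq.mpr hfg⟩

end MTopology

section UniformApproximation

variable {X ι : Type*} [TopologicalSpace X]

lemma exists_abs_le_of_uniform_approx [Countable ι] {F : ι → C(X, ℝ)}
    (hF : ∀ g : C(X, ℝ), ∃ i, ∀ x, |g x - F i x| < 1) (f : C(X, ℝ)) :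
    ∃ M, ∀ x, |f x| ≤ M := by
  -- uncountably many multiples `r • f` share countably many approximants
  choose φ hφ using fun r : ℝ => hF (r • f)
  obtain ⟨r, s, hφrs, hrs⟩ : ∃ r s, φ r = φ s ∧ r ≠ s := by
    simpa [Function.Injective] using not_injective_uncountable_countable φ
  have hpos : 0 < |r - s| := abs_pos.mpr (sub_ne_zero.mpr hrs)
  refine ⟨2 / |r - s|, fun x => (le_div_iff₀' hpos).mpr ?_⟩
  have hr := hφ r x
  have hs := hφ s x
  rw [hφrs] at hr
  simp only [ContinuousMap.smul_apply, smul_eq_mul] at hr hs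
  calc |r - s| * |f x| = |(r * f x - F (φ s) x) - (s * f x - F (φ s) x)| := by
        rw [← abs_mul]; ring_nf
    _ ≤ |r * f x - F (φ s) x| + |s * f x - F (φ s) x| := abs_sub _ _
    _ ≤ 2 := by linarith

lemma isInducing_of_uniform_approx [CompletelyRegularSpace X] {F : ι → C(X, ℝ)}
    (hF : ∀ g : C(X, ℝ), ∀ ε > 0, ∃ i, ∀ x, |g x - F i x| < ε) :
    IsInducing fun x i => F i x := by
  refine isInducing_iff_nhds.mpr fun x =>
    le_antisymm (continuous_pi fun i => (F i).continuous).continuousAt.le_comap ?_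
  intro U hU
  obtain ⟨V, hVU, hVo, hxV⟩ := mem_nhds_iff.mp hU
  obtain ⟨g, hgc, hgx, hgV⟩ :=
    CompletelyRegularSpace.completely_regular_isOpen x V hVo hxV
  obtain ⟨i, hi⟩ := hF ⟨fun y => g y, continuous_subtype_val.comp hgc⟩ (1 / 3) (by norm_num)
  refine Filter.mem_comap.mpr ⟨(· i) ⁻¹' Metric.ball (F i x) (1 / 3),
    (continuous_apply i).continuousAt.preimage_mem_nhds (Metric.ball_mem_nhds _ (by norm_num)),
    fun y hy => hVU (by_contra fun hyV => ?_)⟩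
  have hy' : |F i y - F i x| < 1 / 3 := hy
  have hgy : (g y : ℝ) = 1 := congrArg Subtype.val (hgV hyV)
  have hx := hi x
  have hyi := hi y
  simp only [ContinuousMap.coe_mk, hgx, hgy, Set.Icc.coe_zero] at hx hyi
  rw [abs_lt] at hx hyi hy'
  linarith

lemma isClosed_range_of_forall_bounded {Y : Type*} [MetricSpace Y] {e : X → Y}
    (he : Continuous e) (hb : ∀ f : C(X, ℝ), ∃ M, ∀ x, |f x| ≤ M) : IsClosed (range e) := by
  refine isClosed_of_closure_subset fun y hy => by_contra fun hye => ?_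
  have hpos (x : X) : 0 < dist (e x) y := dist_pos.mpr fun h => hye ⟨x, h⟩
  obtain ⟨M, hM⟩ := hb ⟨fun x => (dist (e x) y)⁻¹,
    (he.dist continuous_const).inv₀ fun x => (hpos x).ne'⟩
  have hM1 : 0 < max M 1 := lt_max_of_lt_right one_pos
  obtain ⟨_, ⟨x, rfl⟩, hx⟩ := Metric.mem_closure_iff.mp hy (max M 1)⁻¹ (inv_pos.mpr hM1)
  have hxM : (dist (e x) y)⁻¹ ≤ max M 1 :=
    (le_abs_self _).trans ((hM x).trans (le_max_left _ _))
  rw [dist_comm] at hx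
  exact (inv_le_comm₀ (hpos x) hM1).mp hxM |>.not_gt hx

lemma compactSpace_of_isInducing_pi [Countable ι] {F : ι → C(X, ℝ)}
    (hF : IsInducing fun x i => F i x) (hb : ∀ f : C(X, ℝ), ∃ M, ∀ x, |f x| ≤ M) :
    CompactSpace X := by
  let := TopologicalSpace.metrizableSpaceMetric (ι → ℝ)
  choose M hM using fun i => hb (F i)
  have hrange : IsCompact (range fun x i => F i x) :=
    (isCompact_univ_pi fun i => isCompact_Icc (a := -M i) (b := M i)).of_isClosed_subset
      (isClosed_range_of_forall_bounded hF.continuous hb)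
      (by rintro _ ⟨x, rfl⟩ i -; exact abs_le.mp (hM i x))
  exact ⟨hF.isCompact_iff.mpr (by rwa [image_univ])⟩

end UniformApproximation

section Characterization

variable {X : Type*} [TopologicalSpace X]

lemma compactSpace_metrizableSpace_eq_top_of_mBall_cover [T35Space X] {I : Ideal C(X, ℝ)}
    {S : Set C(X, ℝ)} (hS : S.Countable)
    (hcover : ∀ g, ∀ ε > 0, ∃ f ∈ S, g ∈ mBall I f (.const X ε)) :
    CompactSpace X ∧ MetrizableSpace X ∧ I = ⊤ := by
  have := countable_quotient_of_mBall_cover hS fun g => hcover g 1 one_pos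
  have := hS.to_subtype
  have happrox : ∀ g : C(X, ℝ), ∀ ε > 0, ∃ f : S, ∀ x, |g x - f.1 x| < ε := fun g ε hε =>
    let ⟨f, hfS, hgf, _⟩ := hcover g ε hε
    ⟨⟨f, hfS⟩, fun x => by simpa [abs_sub_comm] using hgf x⟩
  have hind := isInducing_of_uniform_approx happrox
  exact ⟨compactSpace_of_isInducing_pi hind
      (exists_abs_le_of_uniform_approx fun g => happrox g 1 one_pos),
    hind.isEmbedding.metrizableSpace, I.eq_top_of_countable_quotient (K := ℝ)⟩

lemma isOpen_mBall_top [CompactSpace X] (f u : C(X, ℝ)) :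
    IsOpen (mBall ⊤ f u) := by
  refine Metric.isOpen_iff.mpr fun g hg => ?_
  obtain ⟨m, hm, hmle⟩ := isCompact_univ.exists_forall_le'
    (u.continuous.sub (f.continuous.sub g.continuous).abs).continuousOn
    fun x _ => sub_pos.mpr (hg.1 x)
  refine ⟨m, hm, fun h hh => ⟨fun x => ?_, Submodule.mem_top⟩⟩
  have hgh : |g x - h x| < m := by
    simpa [Real.dist_eq, abs_sub_comm] using ContinuousMap.dist_apply_le_dist x |>.trans_lt hh
  calc |f x - h x| ≤ |f x - g x| + |g x - h x| := abs_sub_le _ _ _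
    _ < u x := by linarith [show m ≤ u x - |f x - g x| from hmle x (mem_univ x)]

lemma mTopology_top_eq_compactOpen [CompactSpace X] :
    mTopology (⊤ : Ideal C(X, ℝ)) = ContinuousMap.compactOpen := by
  refine le_antisymm
    ((le_iff_nhds _ _).mpr fun f => Metric.nhds_basis_ball.ge_iff.mpr fun ε hε => ?_)
    (le_generateFrom <| by rintro _ ⟨f, u, -, rfl⟩; exact isOpen_mBall_top f u)
  have hu : ∀ x, 0 < ContinuousMap.const X ε x := fun _ => hε
  refine Filter.mem_of_superset (@IsOpen.mem_nhds _ (mTopology ⊤) _ _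
    (isOpen_mBall hu) (self_mem_mBall hu)) fun g hg => ?_
  rw [Metric.mem_ball, dist_comm, ContinuousMap.dist_lt_iff hε]
  exact fun x => by simpa [Real.dist_eq] using hg.1 x

end Characterization

/-- for `C(X)` with the `m^I`-topology, the following are equivalent:
(i) second countable; (ii) separable; (iii) Lindelöf;
(iv) `X` is compact and metrizable and `I = C(X)`. -/
theorem stmt_13 {X : Type*} [TopologicalSpace X] [T35Space X] (I : Ideal C(X, ℝ)) :
    [@SecondCountableTopology C(X, ℝ) (mTopology I),
     @SeparableSpace C(X, ℝ) (mTopology I),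
     @LindelofSpace C(X, ℝ) (mTopology I),
     CompactSpace X ∧ MetrizableSpace X ∧ I = ⊤].TFAE := by
  let := mTopology I
  tfae_have 1 → 2 := fun _ => inferInstance
  tfae_have 1 → 3 := fun _ => inferInstance
  tfae_have 2 → 4 := fun h =>
    let ⟨_, hS, hcover⟩ := exists_countable_mBall_cover_of_separableSpace h
    compactSpace_metrizableSpace_eq_top_of_mBall_cover hS hcover
  tfae_have 3 → 4 := fun h =>
    let ⟨_, hS, hcover⟩ := exists_countable_mBall_cover_of_lindelofSpace h
    compactSpace_metrizableSpace_eq_top_of_mBall_cover hS hcover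
  tfae_have 4 → 1 := by
    rintro ⟨_, _, rfl⟩
    rw [mTopology_top_eq_compactOpen]
    infer_instance
  tfae_finish
end

section
/- Let I be an ideal of C(X) and let c ∈ X ∖ ⋂Z[I]. Set c⁺ = {f ∈ C(X) : f(c) > 0} and c⁰ = {f ∈ C(X) : f(c) ≥ 0}. Then, in C(X) with the u^I-topology: (i) c⁺ is open; (ii) c⁰ is closed; (iii) c⁰ is not open; (iv) the closure of c⁺ equals c⁰. -/
open Set Topology TopologicalSpace Pointwise

/-! Evaluation at `c` is continuous for the `u^I`-topology, which is finer than the uniform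
topology; this gives (i) and (ii). Since `c ∉ ⋂ Z[I]`, the ideal `I` contains functions `w` that
are uniformly as small as we like and positive at `c`; `f ± w` then lies in every basic
neighbourhood `B_u(f, I, ε)`, so `c⁰` is not a neighbourhood of `0` and every `f ∈ c⁰` is a limit
of elements `f + w` of `c⁺`. -/

section UTopology

variable {X : Type*} [TopologicalSpace X] (I : Ideal C(X, ℝ))

lemma mem_uBall_self (f : C(X, ℝ)) {ε : ℝ} (hε : 0 < ε) : f ∈ uBall I f ε :=
  ⟨⟨0, hε, fun x => by simp⟩, by simp⟩

lemma uBall_mono (f : C(X, ℝ)) {δ ε : ℝ} (h : δ ≤ ε) : uBall I f δ ⊆ uBall I f ε :=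
  fun _ ⟨⟨M, hM, hMb⟩, hfg⟩ => ⟨⟨M, hM.trans_le h, hMb⟩, hfg⟩

lemma exists_uBall_subset_of_mem {f g : C(X, ℝ)} {ε : ℝ} (hg : g ∈ uBall I f ε) :
    ∃ δ > 0, uBall I g δ ⊆ uBall I f ε := by
  obtain ⟨⟨M, hM, hMb⟩, hfg⟩ := hg
  refine ⟨ε - M, by linarith, ?_⟩
  rintro h ⟨⟨N, hN, hNb⟩, hgh⟩
  refine ⟨⟨M + N, by linarith, fun x => ?_⟩, by simpa using I.add_mem hfg hgh⟩
  calc |f x - h x| = |(f x - g x) + (g x - h x)| := by ring_nf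
    _ ≤ |f x - g x| + |g x - h x| := abs_add_le _ _
    _ ≤ M + N := add_le_add (hMb x) (hNb x)

lemma isTopologicalBasis_uBall :
    @IsTopologicalBasis C(X, ℝ) (uTopology I) {B | ∃ f ε, 0 < ε ∧ B = uBall I f ε} := by
  let := uTopology I
  refine ⟨?_, ?_, rfl⟩
  · rintro _ ⟨f₁, ε₁, -, rfl⟩ _ ⟨f₂, ε₂, -, rfl⟩ g ⟨hg₁, hg₂⟩
    obtain ⟨δ₁, hδ₁, hs₁⟩ := exists_uBall_subset_of_mem I hg₁
    obtain ⟨δ₂, hδ₂, hs₂⟩ := exists_uBall_subset_of_mem I hg₂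
    have hδ : 0 < min δ₁ δ₂ := lt_min hδ₁ hδ₂
    exact ⟨uBall I g (min δ₁ δ₂), ⟨g, _, hδ, rfl⟩, mem_uBall_self I g hδ,
      subset_inter ((uBall_mono I g (min_le_left _ _)).trans hs₁)
        ((uBall_mono I g (min_le_right _ _)).trans hs₂)⟩
  · exact eq_univ_of_forall fun f => ⟨_, ⟨f, 1, one_pos, rfl⟩, mem_uBall_self I f one_pos⟩

lemma hasBasis_nhds_uBall (f : C(X, ℝ)) :
    (@nhds C(X, ℝ) (uTopology I) f).HasBasis (fun ε : ℝ => 0 < ε) (uBall I f) := by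
  let := uTopology I
  refine (isTopologicalBasis_uBall I).nhds_hasBasis.to_hasBasis ?_ ?_
  · rintro _ ⟨⟨g, ε, -, rfl⟩, hf⟩
    exact exists_uBall_subset_of_mem I hf
  · exact fun ε hε => ⟨_, ⟨⟨f, ε, hε, rfl⟩, mem_uBall_self I f hε⟩, subset_rfl⟩

lemma continuous_eval_uTopology (c : X) :
    Continuous[uTopology I, _] fun f : C(X, ℝ) => f c := by
  let := uTopology I
  refine continuous_iff_continuousAt.2 fun f =>
    ((hasBasis_nhds_uBall I f).tendsto_iff Metric.nhds_basis_ball).2 fun ε hε =>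
      ⟨ε, hε, fun g ⟨⟨M, hM, hMb⟩, _⟩ => ?_⟩
  rw [Metric.mem_ball, Real.dist_eq, abs_sub_comm]
  exact (hMb c).trans_lt hM

lemma add_mem_uBall (f : C(X, ℝ)) {w : C(X, ℝ)} (hw : w ∈ I) {M ε : ℝ} (hM : M < ε)
    (hwM : ∀ x, |w x| ≤ M) : f + w ∈ uBall I f ε :=
  ⟨⟨M, hM, fun x => by simpa using hwM x⟩, by simpa using I.neg_mem hw⟩

lemma exists_mem_ideal_pos_abs_le {c : X} (hc : c ∈ (zInter I)ᶜ) {δ : ℝ} (hδ : 0 < δ) :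
    ∃ w ∈ I, 0 < w c ∧ ∀ x, |w x| ≤ δ := by
  obtain ⟨k, hkI, hkc⟩ : ∃ k ∈ I, k c ≠ 0 := by simpa [zInter] using hc
  -- `w = δ k² / (1 + k²)` is a multiple of `k`, hence in `I`, and takes values in `[0, δ]`.
  have hden : ∀ x, 0 < 1 + k x ^ 2 := fun x => by positivity
  let m : C(X, ℝ) := ⟨fun x => δ * k x / (1 + k x ^ 2),
    by fun_prop (disch := exact fun x => (hden x).ne')⟩
  have hmk : ∀ x, (m * k) x = δ * (k x ^ 2 / (1 + k x ^ 2)) := fun x => by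
    simp only [m, ContinuousMap.mul_apply, ContinuousMap.coe_mk]; ring
  refine ⟨m * k, I.mul_mem_left m hkI, by rw [hmk]; positivity, fun x => ?_⟩
  rw [hmk, abs_of_nonneg (by positivity)]
  calc δ * (k x ^ 2 / (1 + k x ^ 2)) ≤ δ * 1 := by
        gcongr; exact (div_le_one (hden x)).2 (by linarith)
    _ = δ := mul_one δ

end UTopology

theorem stmt_19_general {X : Type*} [TopologicalSpace X] (I : Ideal C(X, ℝ))
    (c : X) (hc : c ∈ (zInter I)ᶜ) :
    IsOpen[uTopology I] {f : C(X, ℝ) | 0 < f c} ∧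
    IsClosed[uTopology I] {f : C(X, ℝ) | 0 ≤ f c} ∧
    ¬ IsOpen[uTopology I] {f : C(X, ℝ) | 0 ≤ f c} ∧
    @closure C(X, ℝ) (uTopology I) {f : C(X, ℝ) | 0 < f c} =
      {f : C(X, ℝ) | 0 ≤ f c} := by
  let := uTopology I
  have hev := continuous_eval_uTopology I c
  have hclosed : IsClosed {f : C(X, ℝ) | 0 ≤ f c} := isClosed_le continuous_const hev
  refine ⟨isOpen_lt continuous_const hev, hclosed, fun hopen => ?_, ?_⟩
  · obtain ⟨ε, hε, hsub⟩ := (hasBasis_nhds_uBall I 0).mem_iff.1 (hopen.mem_nhds (by simp))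
    obtain ⟨w, hwI, hwc, hwδ⟩ := exists_mem_ideal_pos_abs_le I hc (half_pos hε)
    have hmem : -w ∈ uBall I 0 ε := by
      simpa using add_mem_uBall I 0 (I.neg_mem hwI) (half_lt_self hε) fun x => by simpa using hwδ x
    have hwc' : 0 ≤ -w c := hsub hmem
    linarith
  refine (closure_minimal (fun (f : C(X, ℝ)) (hf : 0 < f c) => hf.le) hclosed).antisymm
    fun f hf => ?_
  refine (mem_closure_iff_nhds_basis (hasBasis_nhds_uBall I f)).2 fun ε hε => ?_
  obtain ⟨w, hwI, hwc, hwδ⟩ := exists_mem_ideal_pos_abs_le I hc (half_pos hε)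
  exact ⟨f + w, add_pos_of_nonneg_of_pos hf hwc,
    add_mem_uBall I f hwI (half_lt_self hε) hwδ⟩

/-- for `c ∈ X ∖ ⋂ Z[I]`, in `C(X)` with the `u^I`-topology:
(i) `c⁺ = {f : f c > 0}` is open; (ii) `c⁰ = {f : f c ≥ 0}` is closed;
(iii) `c⁰` is not open; (iv) the closure of `c⁺` equals `c⁰`. -/
theorem stmt_19 {X : Type*} [TopologicalSpace X] [T35Space X] (I : Ideal C(X, ℝ))
    (c : X) (hc : c ∈ (zInter I)ᶜ) :
    IsOpen[uTopology I] {f : C(X, ℝ) | 0 < f c} ∧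
    IsClosed[uTopology I] {f : C(X, ℝ) | 0 ≤ f c} ∧
    ¬ IsOpen[uTopology I] {f : C(X, ℝ) | 0 ≤ f c} ∧
    @closure C(X, ℝ) (uTopology I) {f : C(X, ℝ) | 0 < f c} =
      {f : C(X, ℝ) | 0 ≤ f c} :=
  stmt_19_general I c hc
end
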